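/- arXiv:2506.10951 — 2 statements merged into one kernel-verified Lean document; each statement's English description precedes it below -/
import Mathlib

section
/- Let (X, λ) be a convergence approach space and S a set of contractions X → [0,1]. Then the pointwise infimum ⨅_{f ∈ S} f is a contraction. Consequently, the set C(X,V) of contractions X → V is a complete lattice under the pointwise order. -/
open Filter Set
open scoped ENNReal

noncomputable section
attribute [local instance] Classical.propDecidable

instance : Fact ((0:ℝ) ≤ 1) := ⟨zero_le_one⟩

/-- The value quantale `V = [0,1]` with multiplication. -/
abbrev V := unitInterval

/-- Residuation `t ⊘ x` on `[0,1]`: `min (t/x) 1` if `x ≠ 0`, and `1` if `x = 0`. -/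
def oslash (t x : V) : V :=
  if x = 0 then 1
  else ⟨min (t.1 / x.1) 1, ⟨le_min (div_nonneg t.2.1 x.2.1) zero_le_one, min_le_right _ _⟩⟩

/-- The grill of a filter: sets meeting every member of the filter. -/
def grill {X : Type*} (F : Filter X) : Set (Set X) := {B | ∀ S ∈ F, (B ∩ S).Nonempty}

/-- `limsup` of a `V`-valued function along a family of sets. -/
def limsupF {X : Type*} (F : Set (Set X)) (f : X → V) : V := ⨅ s ∈ F, ⨆ t ∈ s, f t

/-- `liminf` of a `V`-valued function along a family of sets. -/
def liminfF {X : Type*} (F : Set (Set X)) (f : X → V) : V := ⨆ s ∈ F, ⨅ t ∈ s, f t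

/-- A convergence approach space structure on `X`, valued in `V = [0,1]`:
`lam F x` measures how well `F` converges to `x` (1 = full convergence);
finer filters converge better, and principal ultrafilters fully converge. -/
structure CAS (X : Type*) where
  lam : Filter X → X → V
  mono : ∀ ⦃F G : Filter X⦄, F ≤ G → lam G ≤ lam F
  centered : ∀ x : X, lam (pure x) x = 1

/-- The standard approach structure on `V`. -/
def lamV (F : Filter V) (v : V) : V := oslash v (⨆ A ∈ grill F, sInf A)

/-- `f : X → V` is a contraction into `(V, λ_V)` (characterized pointwise). -/
def Contr {X : Type*} (Λ : CAS X) (f : X → V) : Prop :=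
  ∀ (F : Filter X) (x : X), Λ.lam F x ≤ oslash (f x) (limsupF F.sets f)

/-- Indicator function of a set, valued in `V`. -/
def theta {X : Type*} (A : Set X) : X → V := fun x => if x ∈ A then 1 else 0

/-- The lower-hull operator: the smallest contraction above `f`. -/
def Cop {X : Type*} (Λ : CAS X) (f : X → V) : X → V :=
  sInf {g : X → V | Contr Λ g ∧ f ≤ g}

/-- The adherence function of a set `A`. -/
def adhSet {X : Type*} (Λ : CAS X) (A : Set X) : X → V :=
  fun x => ⨆ (U : Ultrafilter X) (_ : A ∈ U), Λ.lam U x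

/-- The adherence function of a filter. -/
def adhFilter {X : Type*} (Λ : CAS X) (F : Filter X) : X → V :=
  fun x => ⨆ (U : Ultrafilter X) (_ : (U : Filter X) ≤ F), Λ.lam U x

/-- Adherence in `(V, λ_V)` of a subset of `V`. -/
def adhV (A : Set V) (v : V) : V := ⨆ (U : Ultrafilter V) (_ : A ∈ U), lamV U v

theorem le_oslash_iff {c t a : V} : c ≤ oslash t a ↔ c * a ≤ t := by
  unfold oslash
  split_ifs with ha
  · simp [ha, unitInterval.le_one']
  · have ha : 0 < (a : ℝ) := unitInterval.pos_iff_ne_zero.2 ha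
    rw [← Subtype.coe_le_coe, ← Subtype.coe_le_coe, Set.Icc.coe_mul]
    change (c : ℝ) ≤ min ((t : ℝ) / a) 1 ↔ _
    rw [le_min_iff, le_div_iff₀ ha, and_iff_left c.2.2]

theorem limsupF_mono {X : Type*} (F : Set (Set X)) {f g : X → V} (h : f ≤ g) :
    limsupF F f ≤ limsupF F g :=
  iInf₂_mono fun _ _ => iSup₂_mono fun t _ => h t

section Contr

variable {X : Type*} {Λ : CAS X}

/-- By `le_oslash_iff` a contraction means `λ F x * limsup_F f ≤ f x`; as `limsup_F` is monotone
in `f`, this inequality passes to infima. -/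
theorem Contr.iInf {ι : Sort*} {f : ι → X → V} (hf : ∀ i, Contr Λ (f i)) :
    Contr Λ (fun x => ⨅ i, f i x) := by
  intro F x
  refine le_oslash_iff.2 (le_iInf fun i => ?_)
  calc Λ.lam F x * limsupF F.sets (fun y => ⨅ i, f i y)
      ≤ Λ.lam F x * limsupF F.sets (f i) :=
        mul_le_mul_right (limsupF_mono _ fun y => iInf_le (f · y) i) _
    _ ≤ f i x := le_oslash_iff.1 (hf i F x)

theorem Contr.biInf {S : Set (X → V)} (hS : ∀ f ∈ S, Contr Λ f) :
    Contr Λ (fun x => ⨅ f ∈ S, f x) :=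
  Contr.iInf fun f => Contr.iInf fun hf => hS f hf

instance : InfSet {f : X → V // Contr Λ f} where
  sInf T := ⟨fun x => ⨅ f : T, f.1.1 x, Contr.iInf fun f => f.1.2⟩

theorem isGLB_sInf_contr (T : Set {f : X → V // Contr Λ f}) : IsGLB T (sInf T) :=
  ⟨fun f hf x => iInf_le (fun g : T => g.1.1 x) ⟨f, hf⟩,
    fun _ hg x => le_iInf fun f => hg f.2 x⟩

instance : CompleteLattice {f : X → V // Contr Λ f} :=
  completeLatticeOfInf _ isGLB_sInf_contr

end Contr

/-- the pointwise infimum of any set of contractions is a contraction;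
consequently the set of contractions is a complete lattice for the pointwise order
(every subset has a greatest lower bound and a least upper bound). -/
theorem stmt12 {X : Type*} (Λ : CAS X) :
    (∀ S : Set (X → V), (∀ f ∈ S, Contr Λ f) → Contr Λ (fun x => ⨅ f ∈ S, f x)) ∧
    (∀ T : Set {f : X → V // Contr Λ f}, (∃ g, IsGLB T g) ∧ (∃ g, IsLUB T g)) :=
  ⟨fun _ => Contr.biInf, fun T => ⟨⟨_, isGLB_sInf T⟩, ⟨_, isLUB_sSup T⟩⟩⟩
end
end

section
/- Let (X, λ) be a convergence approach space and define C(f) = ⨅{g contraction : f ≤ g} for f ∈ [0,1]^X. Then C is a lower-hull operator: (1) f ≤ C(f); (2) C(f ∨ g) = C(f) ∨ C(g); (3) C(C(f)) = C(f); (4) C(f · v) = C(f) · v for every constant v ∈ [0,1]. -/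
/-!
On `[0,1]`, multiplication by a constant `v` is left adjoint to residuation `· ⊘ v`, and
`limsup` commutes with binary joins and, multiplication being continuous and monotone, with
multiplication by `v`. Hence contractions are closed under arbitrary infima, binary joins,
multiplication by `v` and residuation by `v`. So `C` is the closure operator of this Moore family;
`C f ∨ C g` and `C f · v` are contractions above `f ∨ g` and `f · v`, and conversely
`C (f · v) ⊘ v` is a contraction above `f`, which gives `C f · v ≤ C (f · v)`.
-/

open Filter Set
open scoped ENNReal

noncomputable section
attribute [local instance] Classical.propDecidable

lemma mul_le_iff_le_oslash {x y v : V} : x * v ≤ y ↔ x ≤ oslash y v := by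
  rcases eq_or_ne v 0 with rfl | hv
  · simp only [mul_zero, oslash, if_true]
    exact ⟨fun _ => le_top, fun _ => bot_le⟩
  · have hv' : (0 : ℝ) < v := lt_of_le_of_ne v.2.1 (Subtype.coe_injective.ne hv).symm
    rw [oslash, if_neg hv, ← Subtype.coe_le_coe, ← Subtype.coe_le_coe, Set.Icc.coe_mul]
    exact ⟨fun h => le_min ((le_div_iff₀ hv').mpr h) x.2.2,
      fun h => (le_div_iff₀ hv').mp (h.trans (min_le_left _ _))⟩

lemma gc_mul_oslash (v : V) : GaloisConnection (· * v) (oslash · v) :=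
  fun _ _ => mul_le_iff_le_oslash

lemma oslash_le_oslash_right (y : V) {z z' : V} (h : z ≤ z') : oslash y z' ≤ oslash y z :=
  mul_le_iff_le_oslash.mp ((mul_le_mul_right h _).trans ((gc_mul_oslash z').l_u_le y))

lemma oslash_le_oslash_mul (t s v : V) : oslash t s ≤ oslash (t * v) (s * v) := by
  rw [← mul_le_iff_le_oslash, ← mul_assoc]
  exact mul_le_mul_left ((gc_mul_oslash s).l_u_le t) v

lemma oslash_inf_le_oslash_sup (a b c d : V) :
    oslash a c ⊓ oslash b d ≤ oslash (a ⊔ b) (c ⊔ d) := by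
  rcases le_total c d with h | h
  · rw [sup_eq_right.mpr h]
    exact inf_le_right.trans ((gc_mul_oslash d).monotone_u le_sup_right)
  · rw [sup_eq_left.mpr h]
    exact inf_le_left.trans ((gc_mul_oslash c).monotone_u le_sup_left)

lemma limsupF_eq_limsup {X : Type*} (F : Filter X) (f : X → V) :
    limsupF F.sets f = limsup f F :=
  limsup_eq_iInf_iSup.symm

lemma limsup_mul_const {X : Type*} (F : Filter X) (f : X → V) (v : V) :
    limsup (fun x => f x * v) F = limsup f F * v := by
  rcases F.eq_or_neBot with rfl | hF
  · simp only [limsup_bot]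
    exact (zero_mul v).symm
  · exact ((monotone_id.mul_const' v).map_limsup_of_continuousAt f (by fun_prop)).symm

section Contraction

variable {X : Type*} {Λ : CAS X}

lemma contr_iff {f : X → V} :
    Contr Λ f ↔ ∀ F x, Λ.lam F x ≤ oslash (f x) (limsup f F) := by
  simp only [Contr, limsupF_eq_limsup]

lemma contr_sInf {S : Set (X → V)} (hS : ∀ g ∈ S, Contr Λ g) : Contr Λ (sInf S) := by
  refine contr_iff.mpr fun F x => ?_
  rw [sInf_apply, (gc_mul_oslash _).u_iInf]
  refine le_iInf fun g => (contr_iff.mp (hS g g.2) F x).trans (oslash_le_oslash_right _ ?_)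
  exact limsup_le_limsup (Eventually.of_forall (sInf_le g.2))

lemma Contr.sup {f g : X → V} (hf : Contr Λ f) (hg : Contr Λ g) : Contr Λ (f ⊔ g) := by
  refine contr_iff.mpr fun F x => ?_
  have hmax : limsup (f ⊔ g) F = limsup f F ⊔ limsup g F := limsup_max
  rw [hmax]
  exact (le_inf (contr_iff.mp hf F x) (contr_iff.mp hg F x)).trans (oslash_inf_le_oslash_sup ..)

lemma Contr.mul_const {g : X → V} (hg : Contr Λ g) (v : V) : Contr Λ (fun x => g x * v) := by
  refine contr_iff.mpr fun F x => ?_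
  rw [limsup_mul_const]
  exact (contr_iff.mp hg F x).trans (oslash_le_oslash_mul ..)

lemma Contr.oslash_const {g : X → V} (hg : Contr Λ g) (v : V) :
    Contr Λ (fun x => oslash (g x) v) := by
  refine contr_iff.mpr fun F x => ?_
  set L := limsup (fun y => oslash (g y) v) F
  have hL : L * v ≤ limsup g F := by
    rw [← limsup_mul_const]
    exact limsup_le_limsup (Eventually.of_forall fun y => (gc_mul_oslash v).l_u_le (g y))
  rw [← mul_le_iff_le_oslash, ← mul_le_iff_le_oslash, mul_assoc, mul_le_iff_le_oslash]
  exact (contr_iff.mp hg F x).trans (oslash_le_oslash_right _ hL)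

end Contraction

section Hull

variable {X : Type*} (Λ : CAS X)

lemma le_cop (f : X → V) : f ≤ Cop Λ f :=
  le_sInf fun _ hg => hg.2

lemma contr_cop (f : X → V) : Contr Λ (Cop Λ f) :=
  contr_sInf fun _ hg => hg.1

variable {Λ}

lemma cop_le {f g : X → V} (hg : Contr Λ g) (hfg : f ≤ g) : Cop Λ f ≤ g :=
  sInf_le ⟨hg, hfg⟩

lemma cop_mono {f g : X → V} (hfg : f ≤ g) : Cop Λ f ≤ Cop Λ g :=
  sInf_le_sInf fun _ hh => ⟨hh.1, hfg.trans hh.2⟩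

lemma cop_eq_self {f : X → V} (hf : Contr Λ f) : Cop Λ f = f :=
  (cop_le hf le_rfl).antisymm (le_cop Λ f)

end Hull

/-- `C(f) = ⨅ {g contraction : f ≤ g}` is a lower-hull operator:
(1) `f ≤ C f`; (2) `C (f ∨ g) = C f ∨ C g`; (3) `C (C f) = C f`;
(4) `C (f · v) = C f · v`. -/
theorem stmt14 {X : Type*} (Λ : CAS X) :
    (∀ f : X → V, f ≤ Cop Λ f) ∧
    (∀ f g : X → V, Cop Λ (f ⊔ g) = Cop Λ f ⊔ Cop Λ g) ∧
    (∀ f : X → V, Cop Λ (Cop Λ f) = Cop Λ f) ∧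
    (∀ (f : X → V) (v : V), Cop Λ (fun x => f x * v) = fun x => Cop Λ f x * v) := by
  refine ⟨le_cop Λ, fun f g => ?_, fun f => cop_eq_self (contr_cop Λ f), fun f v => ?_⟩
  · refine le_antisymm ?_ (sup_le (cop_mono le_sup_left) (cop_mono le_sup_right))
    exact cop_le ((contr_cop Λ f).sup (contr_cop Λ g)) (sup_le_sup (le_cop Λ f) (le_cop Λ g))
  · refine le_antisymm ?_ fun x => ?_
    · exact cop_le ((contr_cop Λ f).mul_const v) fun x => mul_le_mul_left (le_cop Λ f x) v
    · have hf : Cop Λ f ≤ fun x => oslash (Cop Λ (fun x => f x * v) x) v :=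
        cop_le ((contr_cop Λ _).oslash_const v)
          fun x => mul_le_iff_le_oslash.mp (le_cop Λ (fun x => f x * v) x)
      exact mul_le_iff_le_oslash.mpr (hf x)
end
end
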